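/- Let T be a tree on k ≥ 4 vertices and let ν(T) denote the number of edges in a maximum matching of T. Then for every n ≥ k, ex_c(n,T) ≥ (ν(T)−1)(n−ν(T)+1) + C(ν(T)−1, 2), where C(m,2) denotes the binomial coefficient m choose 2. -/

import Mathlib

open SimpleGraph

/-- `G` contains a copy of `F`, i.e. a subgraph isomorphic to `F`
(given by an injective graph homomorphism). -/
def ContainsCopy {α β : Type*} (F : SimpleGraph α) (G : SimpleGraph β) : Prop :=
  ∃ f : α ↪ β, ∀ ⦃a b : α⦄, F.Adj a b → G.Adj (f a) (f b)

/-- The connected Turán number `ex_c(n, F)`: the maximum number of edges of a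
connected `F`-free simple graph on `n` vertices. -/
noncomputable def exConn {α : Type*} (n : ℕ) (F : SimpleGraph α) : ℕ :=
  sSup {m | ∃ G : SimpleGraph (Fin n), G.Connected ∧ ¬ ContainsCopy F G ∧ m = G.edgeSet.ncard}

/-- `ν(G)`: the matching number of `G`, the number of edges in a largest matching. -/
noncomputable def matchingNumber {V : Type*} (G : SimpleGraph V) : ℕ :=
  sSup {m | ∃ M : G.Subgraph, M.IsMatching ∧ m = M.edgeSet.ncard}

/-!
With `t = ν(T) - 1`, take the complete split graph on `n` vertices whose clique has `t` vertices:
it is connected and has `t (n - t) + C(t, 2)` edges. Its clique is a vertex cover, and a copy of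
`T` would pull it back to a vertex cover of `T` with at most `t` vertices. But a matching has at
most as many edges as any vertex cover has vertices, and `T` has a matching with `t + 1` edges.
-/

namespace SimpleGraph

variable {V : Type*} {G : SimpleGraph V}

theorem Subgraph.IsMatching.ncard_edgeSet_le {M : G.Subgraph} (hM : M.IsMatching) {c : Set V}
    (hc : G.IsVertexCover c) (hfin : c.Finite) : M.edgeSet.ncard ≤ c.ncard := by
  -- each edge of `M` is the `toEdge` of its endpoint in `c`
  have hsub :
      M.edgeSet ⊆ (fun v : M.verts => (hM.toEdge v : Sym2 V)) '' (Subtype.val ⁻¹' c) := by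
    refine Sym2.ind fun a b (hab : M.Adj a b) => ?_
    rcases hc (M.adj_sub hab) with ha | hb
    · exact ⟨⟨a, hab.fst_mem⟩, ha, congrArg Subtype.val (hM.toEdge_eq_of_adj hab)⟩
    · exact ⟨⟨b, hab.snd_mem⟩, hb,
        (congrArg Subtype.val (hM.toEdge_eq_of_adj hab.symm)).trans Sym2.eq_swap⟩
  have hfin' : (Subtype.val ⁻¹' c : Set M.verts).Finite :=
    hfin.preimage Subtype.val_injective.injOn
  calc M.edgeSet.ncard ≤ _ := Set.ncard_le_ncard hsub (hfin'.image _)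
    _ ≤ _ := Set.ncard_image_le hfin'
    _ ≤ c.ncard := Set.ncard_le_ncard_of_injOn Subtype.val (fun _ h => h)
        Subtype.val_injective.injOn hfin

theorem matchingNumber_le_ncard_of_isVertexCover {c : Set V} (hc : G.IsVertexCover c)
    (hfin : c.Finite) : matchingNumber G ≤ c.ncard :=
  csSup_le' <| by
    rintro m ⟨M, hM, rfl⟩
    exact hM.ncard_edgeSet_le hc hfin

theorem matchingNumber_le_card [Finite V] (G : SimpleGraph V) : matchingNumber G ≤ Nat.card V :=
  Set.ncard_univ V ▸ matchingNumber_le_ncard_of_isVertexCover isVertexCover_univ Set.finite_univ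

theorem matchingNumber_le_ncard_of_containsCopy {W : Type*} {H : SimpleGraph W}
    (hGH : ContainsCopy G H) {c : Set W} (hc : H.IsVertexCover c) (hfin : c.Finite) :
    matchingNumber G ≤ c.ncard := by
  obtain ⟨f, hf⟩ := hGH
  calc matchingNumber G ≤ (f ⁻¹' c).ncard :=
        matchingNumber_le_ncard_of_isVertexCover (hc.preimage (⟨f, fun h => hf h⟩ : G →g H))
          (hfin.preimage f.injective.injOn)
    _ ≤ c.ncard := Set.ncard_le_ncard_of_injOn f (fun _ h => h) f.injective.injOn hfin

/-- The clique on `S` joined completely to the independent set `Sᶜ`. -/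
def completeSplitGraph (S : Finset V) : SimpleGraph V :=
  fromRel fun v _ => v ∈ S

section completeSplitGraph

variable (S : Finset V)

@[simp]
theorem completeSplitGraph_adj {v w : V} :
    (completeSplitGraph S).Adj v w ↔ v ≠ w ∧ (v ∈ S ∨ w ∈ S) :=
  Iff.rfl

instance [DecidableEq V] : DecidableRel (completeSplitGraph S).Adj :=
  fun _ _ => inferInstanceAs (Decidable (_ ∧ _))

theorem isVertexCover_completeSplitGraph : (completeSplitGraph S).IsVertexCover S :=
  fun _ _ h => h.2

theorem completeSplitGraph_connected {S : Finset V} (hS : S.Nonempty) :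
    (completeSplitGraph S).Connected := by
  obtain ⟨s, hs⟩ := hS
  refine connected_iff_exists_forall_reachable _ |>.mpr ⟨s, fun v => ?_⟩
  obtain rfl | hne := eq_or_ne s v
  · rfl
  · exact Adj.reachable ⟨hne, Or.inl hs⟩

variable [Fintype V] [DecidableEq V]

theorem degree_completeSplitGraph_of_mem {v : V} (hv : v ∈ S) :
    (completeSplitGraph S).degree v = Fintype.card V - 1 := by
  have : (completeSplitGraph S).neighborFinset v = Finset.univ.erase v := by
    ext w
    simp [hv, eq_comm]
  rw [← card_neighborFinset_eq_degree, this, Finset.card_erase_of_mem (Finset.mem_univ v),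
    Finset.card_univ]

theorem degree_completeSplitGraph_of_notMem {v : V} (hv : v ∉ S) :
    (completeSplitGraph S).degree v = S.card := by
  have : (completeSplitGraph S).neighborFinset v = S := by
    ext w
    simp only [mem_neighborFinset, completeSplitGraph_adj, hv, false_or]
    exact ⟨And.right, fun hw => ⟨fun h => hv (h ▸ hw), hw⟩⟩
  rw [← card_neighborFinset_eq_degree, this]

theorem ncard_edgeSet_completeSplitGraph :
    (completeSplitGraph S).edgeSet.ncard =
      S.card * (Fintype.card V - S.card) + S.card.choose 2 := by
  set s := S.card
  set N := Fintype.card V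
  have hsum : ∑ v, (completeSplitGraph S).degree v = s * (N - 1) + (N - s) * s := by
    rw [← Finset.sum_add_sum_compl S,
      Finset.sum_congr rfl fun v hv => degree_completeSplitGraph_of_mem S hv,
      Finset.sum_congr rfl fun v hv =>
        degree_completeSplitGraph_of_notMem S (Finset.mem_compl.mp hv),
      Finset.sum_const, Finset.sum_const, Finset.card_compl, smul_eq_mul, smul_eq_mul]
  have hchoose : 2 * s.choose 2 = s * (s - 1) := by
    rw [Nat.choose_two_right, Nat.two_mul_div_two_of_even s.even_mul_pred_self]
  have hsplit : s * (N - 1) = s * (s - 1) + s * (N - s) := by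
    rcases Nat.eq_zero_or_pos s with hs | hs
    · simp [hs]
    · rw [← Nat.mul_add]
      have := S.card_le_univ
      congr 1
      omega
  rw [sum_degrees_eq_twice_card_edges] at hsum
  rw [← coe_edgeFinset, Set.ncard_coe_finset]
  linarith [Nat.mul_comm s (N - s)]

end completeSplitGraph

end SimpleGraph

theorem ncard_edgeSet_le_exConn {α : Type*} {F : SimpleGraph α} {n : ℕ}
    {G : SimpleGraph (Fin n)}
    (hG : G.Connected) (hF : ¬ ContainsCopy F G) : G.edgeSet.ncard ≤ exConn n F :=
  le_csSup ⟨Nat.card (Sym2 (Fin n)), by rintro m ⟨H, -, -, rfl⟩; exact Set.ncard_le_card _⟩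
    ⟨G, hG, hF, rfl⟩

theorem exConn_ge_of_matchingNumber_general {V : Type*} [Fintype V] (T : SimpleGraph V) (k : ℕ)
    (hcard : Fintype.card V = k) (n : ℕ) (hn : k ≤ n) :
    (matchingNumber T - 1) * (n - matchingNumber T + 1) + (matchingNumber T - 1).choose 2
      ≤ exConn n T := by
  obtain hν | hν := le_or_gt (matchingNumber T) 1
  · simp [Nat.sub_eq_zero_of_le hν]
  have hνn : matchingNumber T ≤ n := by
    have := matchingNumber_le_card T
    rw [Nat.card_eq_fintype_card] at this
    omega
  obtain ⟨S, -, hS⟩ := Finset.exists_subset_card_eq (s := (Finset.univ : Finset (Fin n)))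
    (n := matchingNumber T - 1) (by rw [Finset.card_univ, Fintype.card_fin]; omega)
  have hfree : ¬ ContainsCopy T (completeSplitGraph S) := fun h => by
    have := matchingNumber_le_ncard_of_containsCopy h (isVertexCover_completeSplitGraph S)
      S.finite_toSet
    rw [Set.ncard_coe_finset] at this
    omega
  calc _ = (completeSplitGraph S).edgeSet.ncard := by
        rw [ncard_edgeSet_completeSplitGraph, Fintype.card_fin, hS,
          show n - matchingNumber T + 1 = n - (matchingNumber T - 1) by omega]
    _ ≤ exConn n T :=
        ncard_edgeSet_le_exConn (completeSplitGraph_connected (Finset.card_pos.mp (by omega))) hfree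

/-- Proposition (matching number construction): for a tree `T` on `k ≥ 4` vertices and
`n ≥ k`, `ex_c(n,T) ≥ (ν(T)-1)(n-ν(T)+1) + C(ν(T)-1, 2)`. -/
theorem exConn_ge_of_matchingNumber {V : Type*} [Fintype V] (T : SimpleGraph V) (k : ℕ)
    (hk : 4 ≤ k) (hcard : Fintype.card V = k) (hT : T.IsTree) (n : ℕ) (hn : k ≤ n) :
    (matchingNumber T - 1) * (n - matchingNumber T + 1) + (matchingNumber T - 1).choose 2
      ≤ exConn n T :=
  exConn_ge_of_matchingNumber_general T k hcard n hn
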